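/- arXiv:1111.3212 — 2 statements merged into one kernel-verified Lean document; each statement's English description precedes it below -/
import Mathlib

section
/- Let X be an infinite set and f : X → X a function. Then Closed(f) = {ρ ∈ Top(X) : f is a closed map from (X, ρ) to (X, ρ)} is closed in Top(X) (closed in the subspace topology on Top(X)). -/
/-!
A topology is determined by its family of open sets, so `f` is a closed map for the topology
coded by `F` exactly when `F Cᶜ = true → F (f '' C)ᶜ = true` for every `C`. Each of these
conditions involves only two coordinates of `F` and is therefore clopen in the product
topology of `Set X → Bool`; `Closed(f)` is the trace on `Top(X)` of their intersection.
-/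

open Set

/-- `Top(X)` as a subset of `2^{P(X)} = (Set X → Bool)`. -/
def TopSet (X : Type*) : Set (Set X → Bool) :=
  {F | ∃ t : TopologicalSpace X, ∀ A : Set X, F A = true ↔ t.IsOpen A}

theorem isClosed_setOf_apply_imp_apply {ι : Type*} (i j : ι) :
    IsClosed {F : ι → Bool | F i = true → F j = true} :=
  isClosed_imp ((isOpen_discrete {true}).preimage (continuous_apply (A := fun _ => Bool) i))
    ((isClosed_discrete {true}).preimage (continuous_apply (A := fun _ => Bool) j))

theorem isClosedMap_iff_of_isOpen_iff {X : Type*} {t : TopologicalSpace X} {F : Set X → Bool}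
    (ht : ∀ A : Set X, F A = true ↔ IsOpen A) (f : X → X) :
    IsClosedMap f ↔ ∀ C : Set X, F Cᶜ = true → F (f '' C)ᶜ = true := by
  simp only [ht, isOpen_compl_iff]
  rfl

theorem Closed_isClosed_in_TopSet_general (X : Type*) (f : X → X) :
    IsClosed {ρ : ↥(TopSet X) | ∃ t : TopologicalSpace X,
      (∀ A : Set X, ρ.val A = true ↔ t.IsOpen A) ∧ @IsClosedMap X X t t f} := by
  have hClosed : {ρ : ↥(TopSet X) | ∃ t : TopologicalSpace X,
      (∀ A : Set X, ρ.val A = true ↔ t.IsOpen A) ∧ @IsClosedMap X X t t f} =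
      Subtype.val ⁻¹' ⋂ C : Set X, {F | F Cᶜ = true → F (f '' C)ᶜ = true} := by
    ext ⟨F, t, ht⟩
    simp only [mem_ofPred_eq, mem_preimage, mem_iInter]
    constructor
    · rintro ⟨t', ht', hf⟩
      exact (isClosedMap_iff_of_isOpen_iff ht' f).1 hf
    · exact fun h => ⟨t, ht, (isClosedMap_iff_of_isOpen_iff ht f).2 h⟩
  rw [hClosed]
  exact (isClosed_iInter fun C => isClosed_setOf_apply_imp_apply _ _).preimage
    continuous_subtype_val

/-- for an infinite set `X` and `f : X → X`, the set
`Closed(f) = {ρ ∈ Top(X) : f : (X,ρ) → (X,ρ) is a closed map}` is closed in the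
subspace `Top(X)` of `2^{P(X)}`. -/
theorem Closed_isClosed_in_TopSet (X : Type*) [Infinite X] (f : X → X) :
    IsClosed {ρ : ↥(TopSet X) | ∃ t : TopologicalSpace X,
      (∀ A : Set X, ρ.val A = true ↔ t.IsOpen A) ∧ @IsClosedMap X X t t f} :=
  Closed_isClosed_in_TopSet_general X f
end

section
/- Let X be an infinite set. Then LatB(X) is a closed (hence compact) subset of the product space 2^{P(X)}, Top(X) ⊆ LatB(X), and Top(X) is dense in LatB(X) (the closure of Top(X) in 2^{P(X)} contains LatB(X)); thus LatB(X) is a Hausdorff compactification of Top(X). -/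
/-- `LatB(X)`: sublattices of `P(X)` containing `∅` and `X`. -/
def LatBSet (X : Type*) : Set (Set X → Bool) :=
  {F | F ∅ = true ∧ F Set.univ = true ∧
       ∀ A B : Set X, F A = true → F B = true →
         F (A ∪ B) = true ∧ F (A ∩ B) = true}

open Set TopologicalSpace Topology

theorem mem_closure_of_forall_finset_exists_eqOn {ι Y : Type*} [TopologicalSpace Y]
    {T : Set (ι → Y)} {f : ι → Y} (h : ∀ I : Finset ι, ∃ g ∈ T, ∀ i ∈ I, g i = f i) :
    f ∈ closure T := by
  refine mem_closure_iff.2 fun o ho hfo => ?_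
  obtain ⟨I, u, hu, hIu⟩ := isOpen_pi_iff.1 ho f hfo
  obtain ⟨g, hgT, hgf⟩ := h I
  exact ⟨g, hIu fun i hi => (hgf i hi).symm ▸ (hu i hi).2, hgT⟩

theorem IsSublattice.mem_of_isOpen_generateFrom {X : Type*} {L s : Set (Set X)}
    (hL : IsSublattice L) (hempty : ∅ ∈ L) (huniv : univ ∈ L) (hs : s.Finite) (hsL : s ⊆ L)
    {U : Set X} (hU : IsOpen[generateFrom s] U) : U ∈ L := by
  let := generateFrom s
  let B := (fun f => ⋂₀ f) '' {f : Set (Set X) | f.Finite ∧ f ⊆ s}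
  have hBL : B ⊆ L := by
    rintro _ ⟨f, ⟨hf, hfs⟩, rfl⟩
    exact hL.infClosed.sInf_mem hf huniv (hfs.trans hsL)
  have hB : B.Finite := (hs.finite_subsets.subset fun f hf => hf.2).image _
  obtain ⟨S, hSB, rfl⟩ := (isTopologicalBasis_of_subbasis rfl).open_eq_sUnion hU
  exact hL.supClosed.sSup_mem (hB.subset hSB) hempty (hSB.trans hBL)

theorem isClosed_latBSet (X : Type*) : IsClosed (LatBSet X) := by
  have hlat (A B : Set X) : IsClosed {F : Set X → Bool |
      F A = true → F B = true → F (A ∪ B) = true ∧ F (A ∩ B) = true} :=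
    (isClosed_discrete {p : Bool × Bool × Bool × Bool |
      p.1 = true → p.2.1 = true → p.2.2.1 = true ∧ p.2.2.2 = true}).preimage
      (f := fun F : Set X → Bool => (F A, F B, F (A ∪ B), F (A ∩ B))) (by fun_prop)
  have heval (A : Set X) : IsClosed {F : Set X → Bool | F A = true} :=
    (isClosed_discrete {true}).preimage (f := fun F : Set X → Bool => F A) (continuous_apply A)
  simp only [LatBSet, ofPred_and, ofPred_forall]
  exact (heval ∅).inter <| (heval univ).inter <| isClosed_iInter fun A => isClosed_iInter (hlat A)

theorem topSet_subset_latBSet (X : Type*) : TopSet X ⊆ LatBSet X := by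
  rintro F ⟨t, ht⟩
  simp only [LatBSet, mem_ofPred_eq, ht]
  exact ⟨isOpen_empty, isOpen_univ, fun A B hA hB => ⟨IsOpen.union hA hB, IsOpen.inter hA hB⟩⟩

theorem isSublattice_of_mem_latBSet {X : Type*} {F : Set X → Bool} (hF : F ∈ LatBSet X) :
    IsSublattice {A | F A = true} :=
  ⟨fun _ hA _ hB => (hF.2.2 _ _ hA hB).1, fun _ hA _ hB => (hF.2.2 _ _ hA hB).2⟩

theorem latBSet_subset_closure_topSet (X : Type*) : LatBSet X ⊆ closure (TopSet X) := by
  classical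
  intro F hF
  refine mem_closure_of_forall_finset_exists_eqOn fun I => ?_
  let s : Set (Set X) := {A ∈ (I : Set (Set X)) | F A = true}
  have hopen {U : Set X} : IsOpen[generateFrom s] U → F U = true :=
    (isSublattice_of_mem_latBSet hF).mem_of_isOpen_generateFrom hF.1 hF.2.1
      (I.finite_toSet.subset (sep_subset _ _)) (sep_subset_ofPred _ _)
  refine ⟨fun A => decide (IsOpen[generateFrom s] A), ⟨generateFrom s, fun A => decide_eq_true_iff⟩,
    fun A hA => ?_⟩
  rw [Bool.eq_iff_iff, decide_eq_true_iff]
  exact ⟨hopen, fun hFA => isOpen_generateFrom_of_mem ⟨hA, hFA⟩⟩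

theorem latBSet_compactification_of_topSet_general (X : Type*) :
    IsClosed (LatBSet X) ∧ IsCompact (LatBSet X) ∧
      TopSet X ⊆ LatBSet X ∧ LatBSet X ⊆ closure (TopSet X) :=
  ⟨isClosed_latBSet X, (isClosed_latBSet X).isCompact, topSet_subset_latBSet X,
    latBSet_subset_closure_topSet X⟩

/-- for an infinite set `X`, `LatB(X)` is closed (hence compact)
in `2^{P(X)}`, `Top(X) ⊆ LatB(X)`, and `Top(X)` is dense in `LatB(X)`; thus
`LatB(X)` is a Hausdorff compactification of `Top(X)`. -/
theorem latBSet_compactification_of_topSet (X : Type*) [Infinite X] :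
    IsClosed (LatBSet X) ∧ IsCompact (LatBSet X) ∧
      TopSet X ⊆ LatBSet X ∧ LatBSet X ⊆ closure (TopSet X) :=
  latBSet_compactification_of_topSet_general X
end
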